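/- Let Y, Ỹ ∈ ℝ^{n×k} have orthonormal columns, and set E = YYᵀ − ỸỸᵀ with ‖E‖_F ≤ ε for some ε ≥ 0. Let X̃, X_opt ∈ ℝ^{n×k} have orthonormal columns, let γ ≥ 1, and suppose ‖Ỹ − X̃X̃ᵀỸ‖_F² ≤ γ · ‖Ỹ − X_opt X_optᵀ Ỹ‖_F². Writing F_opt = ‖Y − X_opt X_optᵀ Y‖_F², it holds that ‖Y − X̃X̃ᵀY‖_F² ≤ γ · (F_opt + 4ε√F_opt + 4ε²). -/

import Mathlib

open Matrix

/-- Squared Frobenius norm of a real matrix: `‖A‖_F² = Σ_{i,j} A_{ij}²`. -/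
noncomputable def frobSq {m n : ℕ} (A : Matrix (Fin m) (Fin n) ℝ) : ℝ :=
  ∑ i, ∑ j, (A i j) ^ 2

/-- Frobenius norm of a real matrix. -/
noncomputable def frobNorm {m n : ℕ} (A : Matrix (Fin m) (Fin n) ℝ) : ℝ :=
  Real.sqrt (frobSq A)

/-!
Since `Y` has orthonormal columns, `‖(I - XXᵀ)Y‖_F = ‖(I - XXᵀ)YYᵀ‖_F`: the residual of projecting
`Y` away from the columns of `X` depends only on the projector `YYᵀ`. As `I - XXᵀ` is an orthogonal
projection it does not increase the Frobenius norm, so replacing `Y` by `Ỹ` changes this residual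
by at most `‖YYᵀ - ỸỸᵀ‖_F ≤ ε`. Doing this for `X̃` and for `X_opt`, and taking square roots in the
`γ`-approximation, gives `‖(I - X̃X̃ᵀ)Y‖_F ≤ √γ (√F_opt + 2ε)`; squaring yields the bound.
-/

open scoped Matrix.Norms.Frobenius

namespace Matrix

theorem isSymm_one_sub_mul_transpose {m n : Type*} [DecidableEq m] [Fintype n]
    (X : Matrix m n ℝ) : (1 - X * Xᵀ).IsSymm :=
  isSymm_one.sub <| by rw [IsSymm, transpose_mul, transpose_transpose]

theorem isIdempotentElem_one_sub_mul_transpose {m n : Type*} [Fintype m] [Fintype n]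
    [DecidableEq m] [DecidableEq n] {X : Matrix m n ℝ} (hX : Xᵀ * X = 1) :
    IsIdempotentElem (1 - X * Xᵀ) := by
  refine IsIdempotentElem.one_sub ?_
  rw [IsIdempotentElem, Matrix.mul_assoc, ← Matrix.mul_assoc Xᵀ, hX, Matrix.one_mul]

variable {l m n : Type*} [Fintype l] [Fintype m] [Fintype n]

theorem frobenius_norm_sq_eq_trace (A : Matrix m n ℝ) : ‖A‖ ^ 2 = trace (Aᵀ * A) := by
  rw [frobenius_norm_def, ← Real.sqrt_eq_rpow, Real.sq_sqrt (by positivity), Finset.sum_comm]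
  simp [trace, mul_apply, sq]

theorem frobenius_norm_mul_of_transpose_mul_self_eq_one [DecidableEq n] {Z : Matrix m n ℝ}
    (hZ : Zᵀ * Z = 1) (A : Matrix n l ℝ) : ‖Z * A‖ = ‖A‖ := by
  rw [← sq_eq_sq₀ (norm_nonneg _) (norm_nonneg _), frobenius_norm_sq_eq_trace,
    frobenius_norm_sq_eq_trace, transpose_mul, Matrix.mul_assoc, ← Matrix.mul_assoc Zᵀ, hZ,
    Matrix.one_mul]

theorem frobenius_norm_mul_mul_transpose_of_transpose_mul_self_eq_one [DecidableEq n]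
    {Z : Matrix m n ℝ} (hZ : Zᵀ * Z = 1) (A : Matrix l m ℝ) : ‖A * (Z * Zᵀ)‖ = ‖A * Z‖ := by
  rw [← frobenius_norm_transpose, transpose_mul, transpose_mul, transpose_transpose,
    Matrix.mul_assoc, frobenius_norm_mul_of_transpose_mul_self_eq_one hZ, ← transpose_mul,
    frobenius_norm_transpose]

theorem frobenius_norm_sq_eq_add_of_isSymm_of_isIdempotentElem {P : Matrix m m ℝ} (hPs : P.IsSymm)
    (hPi : IsIdempotentElem P) (E : Matrix m n ℝ) :
    ‖E‖ ^ 2 = ‖P * E‖ ^ 2 + ‖E - P * E‖ ^ 2 := by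
  have hPE : (P * E)ᵀ * (P * E) = Eᵀ * (P * E) := by
    rw [transpose_mul, hPs.eq, Matrix.mul_assoc, ← Matrix.mul_assoc P, hPi.eq]
  simp only [frobenius_norm_sq_eq_trace]
  rw [transpose_sub, Matrix.sub_mul, Matrix.mul_sub, Matrix.mul_sub, hPE, transpose_mul, hPs.eq,
    Matrix.mul_assoc]
  simp only [trace_sub]
  ring

theorem frobenius_norm_mul_le_of_isSymm_of_isIdempotentElem {P : Matrix m m ℝ} (hPs : P.IsSymm)
    (hPi : IsIdempotentElem P) (E : Matrix m n ℝ) : ‖P * E‖ ≤ ‖E‖ := by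
  refine le_of_pow_le_pow_left₀ two_ne_zero (norm_nonneg _) ?_
  rw [frobenius_norm_sq_eq_add_of_isSymm_of_isIdempotentElem hPs hPi E]
  exact le_add_of_nonneg_right (sq_nonneg _)

theorem frobenius_norm_sub_proj_le {k : Type*} [Fintype k] [DecidableEq m] [DecidableEq n]
    [DecidableEq k] {X : Matrix m n ℝ} {Y Y' : Matrix m k ℝ} (hX : Xᵀ * X = 1) (hY : Yᵀ * Y = 1) (hY' : Y'ᵀ * Y' = 1) :
    ‖Y - X * Xᵀ * Y‖ ≤ ‖Y' - X * Xᵀ * Y'‖ + ‖Y * Yᵀ - Y' * Y'ᵀ‖ := by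
  set Q := 1 - X * Xᵀ
  have hQ (Z : Matrix m k ℝ) : Z - X * Xᵀ * Z = Q * Z := by rw [Matrix.sub_mul, Matrix.one_mul]
  rw [hQ, hQ, ← frobenius_norm_mul_mul_transpose_of_transpose_mul_self_eq_one hY,
    ← frobenius_norm_mul_mul_transpose_of_transpose_mul_self_eq_one hY']
  calc ‖Q * (Y * Yᵀ)‖ = ‖Q * (Y' * Y'ᵀ) + Q * (Y * Yᵀ - Y' * Y'ᵀ)‖ := by
        rw [← Matrix.mul_add, add_sub_cancel]
    _ ≤ ‖Q * (Y' * Y'ᵀ)‖ + ‖Q * (Y * Yᵀ - Y' * Y'ᵀ)‖ := norm_add_le _ _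
    _ ≤ ‖Q * (Y' * Y'ᵀ)‖ + ‖Y * Yᵀ - Y' * Y'ᵀ‖ := by
        gcongr
        exact frobenius_norm_mul_le_of_isSymm_of_isIdempotentElem
          (isSymm_one_sub_mul_transpose X) (isIdempotentElem_one_sub_mul_transpose hX) _

end Matrix

theorem frobSq_eq_norm_sq {m n : ℕ} (A : Matrix (Fin m) (Fin n) ℝ) : frobSq A = ‖A‖ ^ 2 := by
  rw [frobenius_norm_def, ← Real.sqrt_eq_rpow, Real.sq_sqrt (by positivity), frobSq]
  simp

theorem frobNorm_eq_norm {m n : ℕ} (A : Matrix (Fin m) (Fin n) ℝ) : frobNorm A = ‖A‖ := by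
  rw [frobNorm, frobSq_eq_norm_sq, Real.sqrt_sq (norm_nonneg _)]

theorem approx_clustering_frobSq_bound_general (n k : ℕ)
    (Y Yt Xt Xopt : Matrix (Fin n) (Fin k) ℝ)
    (hY : Yᵀ * Y = 1) (hYt : Ytᵀ * Yt = 1)
    (hXt : Xtᵀ * Xt = 1) (hXopt : Xoptᵀ * Xopt = 1)
    (ε : ℝ)
    (hE : frobNorm (Y * Yᵀ - Yt * Ytᵀ) ≤ ε)
    (γ : ℝ) (hγ : 1 ≤ γ)
    (happrox : frobSq (Yt - Xt * Xtᵀ * Yt) ≤ γ * frobSq (Yt - Xopt * Xoptᵀ * Yt)) :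
    frobSq (Y - Xt * Xtᵀ * Y) ≤
      γ * (frobSq (Y - Xopt * Xoptᵀ * Y)
        + 4 * ε * Real.sqrt (frobSq (Y - Xopt * Xoptᵀ * Y)) + 4 * ε ^ 2) := by
  simp only [frobSq_eq_norm_sq, frobNorm_eq_norm] at hE happrox ⊢
  rw [Real.sqrt_sq (norm_nonneg _)]
  set b := ‖Y - Xopt * Xoptᵀ * Y‖
  have hε : 0 ≤ ε := (norm_nonneg _).trans hE
  have hs : 1 ≤ √γ := Real.one_le_sqrt.mpr hγ
  have hXt_cmp := frobenius_norm_sub_proj_le hXt hY hYt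
  have hXopt_cmp := frobenius_norm_sub_proj_le hXopt hYt hY
  rw [norm_sub_rev (Yt * Ytᵀ)] at hXopt_cmp
  have happrox' : ‖Yt - Xt * Xtᵀ * Yt‖ ≤ √γ * ‖Yt - Xopt * Xoptᵀ * Yt‖ := by
    refine le_of_pow_le_pow_left₀ two_ne_zero (by positivity) ?_
    rwa [mul_pow, Real.sq_sqrt (by linarith)]
  have hmain : ‖Y - Xt * Xtᵀ * Y‖ ≤ √γ * (b + 2 * ε) := by
    calc ‖Y - Xt * Xtᵀ * Y‖ ≤ √γ * ‖Yt - Xopt * Xoptᵀ * Yt‖ + ε := by linarith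
      _ ≤ √γ * (b + ε) + ε := by gcongr; linarith
      _ ≤ √γ * (b + 2 * ε) := by nlinarith
  calc ‖Y - Xt * Xtᵀ * Y‖ ^ 2 ≤ (√γ * (b + 2 * ε)) ^ 2 := by gcongr
    _ = γ * (b ^ 2 + 4 * ε * b + 4 * ε ^ 2) := by rw [mul_pow, Real.sq_sqrt (by linarith)]; ring

/-- If `Y, Ỹ` have orthonormal columns with `‖YYᵀ − ỸỸᵀ‖_F ≤ ε`, and the
indicator matrix `X̃` is a `γ`-approximate `k`-means solution on `Ỹ`, then with
`F_opt = ‖Y − X_opt X_optᵀ Y‖_F²` we have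
`‖Y − X̃X̃ᵀY‖_F² ≤ γ·(F_opt + 4ε√F_opt + 4ε²)`. -/
theorem approx_clustering_frobSq_bound (n k : ℕ)
    (Y Yt Xt Xopt : Matrix (Fin n) (Fin k) ℝ)
    (hY : Yᵀ * Y = 1) (hYt : Ytᵀ * Yt = 1)
    (hXt : Xtᵀ * Xt = 1) (hXopt : Xoptᵀ * Xopt = 1)
    (ε : ℝ) (hε : 0 ≤ ε)
    (hE : frobNorm (Y * Yᵀ - Yt * Ytᵀ) ≤ ε)
    (γ : ℝ) (hγ : 1 ≤ γ)
    (happrox : frobSq (Yt - Xt * Xtᵀ * Yt) ≤ γ * frobSq (Yt - Xopt * Xoptᵀ * Yt)) :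
    frobSq (Y - Xt * Xtᵀ * Y) ≤
      γ * (frobSq (Y - Xopt * Xoptᵀ * Y)
        + 4 * ε * Real.sqrt (frobSq (Y - Xopt * Xoptᵀ * Y)) + 4 * ε ^ 2) :=
  approx_clustering_frobSq_bound_general n k Y Yt Xt Xopt hY hYt hXt hXopt ε hE γ hγ happrox
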